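/- Horizontal composition of 2-tracks is well defined: if g is rank-2 homotopic to g', h is rank-2 homotopic to h', and the single point g(ℝ×{1}) equals the single point h(ℝ×{0}) (rank-2 homotopies, being 3-paths, preserve these single points), then the horizontal composition g∘h is rank-2 homotopic to g'∘h'. -/

import Mathlib

open scoped Manifold

variable (E : Type*) [NormedAddCommGroup E] [NormedSpace ℝ E] [FiniteDimensional ℝ E]
variable {M : Type*} [TopologicalSpace M] [ChartedSpace E M]
  [IsManifold 𝓘(ℝ, E) ((⊤ : ℕ∞) : WithTop ℕ∞) M]

/-- A 1-path in `M`: a smooth map `ℝ → M` that is constant near `(-∞, 0]` and near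
`[1, ∞)` (in the sense of the `ε`-conditions). -/
def IsOnePath (γ : ℝ → M) : Prop :=
  ContMDiff 𝓘(ℝ, ℝ) 𝓘(ℝ, E) (⊤ : ℕ∞) γ ∧
    ∃ ε > (0 : ℝ), (∀ t ≤ ε, γ t = γ 0) ∧ (∀ t, 1 - ε ≤ t → γ t = γ 1)

/-- A 2-path in `M`, as a smooth map `ℝ × ℝ → M` with coordinates `(s, t)`,
constant near the boundary in each variable, whose images at `t = 0` and `t = 1`
are single points. -/
def IsTwoPath (g : ℝ × ℝ → M) : Prop :=
  ContMDiff 𝓘(ℝ, ℝ × ℝ) 𝓘(ℝ, E) (⊤ : ℕ∞) g ∧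
    (∃ ε > (0 : ℝ),
      (∀ s t, s ≤ ε → g (s, t) = g (0, t)) ∧
      (∀ s t, 1 - ε ≤ s → g (s, t) = g (1, t)) ∧
      (∀ s t, t ≤ ε → g (s, t) = g (s, 0)) ∧
      (∀ s t, 1 - ε ≤ t → g (s, t) = g (s, 1))) ∧
    (∀ s s', g (s, 0) = g (s', 0)) ∧ (∀ s s', g (s, 1) = g (s', 1))

/-- A rank-1 homotopy: a 2-path whose differential has rank at most 1 at every point. -/
def IsRank1Homotopy (h : ℝ × ℝ → M) : Prop :=
  IsTwoPath E h ∧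
    ∀ p : ℝ × ℝ,
      Module.finrank ℝ
        (LinearMap.range (mfderiv 𝓘(ℝ, ℝ × ℝ) 𝓘(ℝ, E) h p).toLinearMap) ≤ 1

/-- Two 1-paths are rank-1 homotopic if they are joined by a rank-1 homotopy. -/
def Rank1Homotopic (γ γ' : ℝ → M) : Prop :=
  ∃ h : ℝ × ℝ → M, IsRank1Homotopy E h ∧ (∀ t, h (0, t) = γ t) ∧ (∀ t, h (1, t) = γ' t)

/-- A 3-path in `M`, as a smooth map `ℝ × ℝ × ℝ → M` with coordinates `(r, s, t)`. -/
def IsThreePath (α : ℝ × ℝ × ℝ → M) : Prop :=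
  ContMDiff 𝓘(ℝ, ℝ × ℝ × ℝ) 𝓘(ℝ, E) (⊤ : ℕ∞) α ∧
    (∃ ε > (0 : ℝ),
      (∀ r s t, r ≤ ε → α (r, s, t) = α (0, s, t)) ∧
      (∀ r s t, 1 - ε ≤ r → α (r, s, t) = α (1, s, t)) ∧
      (∀ r s t, s ≤ ε → α (r, s, t) = α (r, 0, t)) ∧
      (∀ r s t, 1 - ε ≤ s → α (r, s, t) = α (r, 1, t)) ∧
      (∀ r s t, t ≤ ε → α (r, s, t) = α (r, s, 0)) ∧
      (∀ r s t, 1 - ε ≤ t → α (r, s, t) = α (r, s, 1))) ∧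
    (∀ r s r' s', α (r, s, 0) = α (r', s', 0)) ∧
    (∀ r s r' s', α (r, s, 1) = α (r', s', 1))

/-- A rank-2 homotopy: a 3-path whose differential has rank at most 2 at every point and
whose restrictions to `s = 0` and `s = 1` are rank-1 homotopies. -/
def IsRank2Homotopy (α : ℝ × ℝ × ℝ → M) : Prop :=
  IsThreePath E α ∧
    (∀ p : ℝ × ℝ × ℝ,
      Module.finrank ℝ
        (LinearMap.range (mfderiv 𝓘(ℝ, ℝ × ℝ × ℝ) 𝓘(ℝ, E) α p).toLinearMap) ≤ 2) ∧
    IsRank1Homotopy E (fun p : ℝ × ℝ => α (p.1, 0, p.2)) ∧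
    IsRank1Homotopy E (fun p : ℝ × ℝ => α (p.1, 1, p.2))

/-- `α` is a rank-2 homotopy from the 2-path `g` to the 2-path `g'`. -/
def Rank2HomotopyFrom (α : ℝ × ℝ × ℝ → M) (g g' : ℝ × ℝ → M) : Prop :=
  IsRank2Homotopy E α ∧ (∀ s t, α (0, s, t) = g (s, t)) ∧ (∀ s t, α (1, s, t) = g' (s, t))

/-- Two 2-paths are rank-2 homotopic if they are joined by a rank-2 homotopy. -/
def Rank2Homotopic (g g' : ℝ × ℝ → M) : Prop :=
  ∃ α : ℝ × ℝ × ℝ → M, Rank2HomotopyFrom E α g g'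

/-- Horizontal composition of 2-paths. -/
noncomputable def horizComp (g h : ℝ × ℝ → M) : ℝ × ℝ → M := fun p =>
  if p.2 ≤ 1 / 2 then g (p.1, 2 * p.2) else h (p.1, 2 * p.2 - 1)

/-!
Glue rank-2 homotopies `α : g ⇒ g'` and `β : h ⇒ h'` side by side in the last variable, for
each value of the homotopy parameter. Since 3-paths are constant near `t = 1` and near `t = 0`,
both halves equal the common point on a band around the seam `t = 1/2`; so the glued map is,
near every point, a smooth affine reparametrisation of `α` or of `β`. Hence it is smooth, and its
differential has rank at most 2 because precomposition cannot raise the rank. Its faces `s = 0`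
and `s = 1` are the horizontal composites of the rank-1 faces of `α` and `β`, handled the same way.
-/

open Filter Topology

section Piecewise

variable {X Y : Type*} [TopologicalSpace X]

theorem ite_eventuallyEq_or {τ : X → ℝ} (hτ : Continuous τ) {a δ : ℝ} (hδ : 0 < δ) {G₁ G₂ : X → Y}
    (hG : ∀ x, |τ x - a| < δ → G₁ x = G₂ x) (p : X) :
    (fun x => if τ x ≤ a then G₁ x else G₂ x) =ᶠ[𝓝 p] G₁ ∨
      (fun x => if τ x ≤ a then G₁ x else G₂ x) =ᶠ[𝓝 p] G₂ := by
  rcases le_or_gt (τ p) a with hp | hp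
  · left
    filter_upwards [(isOpen_lt hτ continuous_const).mem_nhds (show τ p < a + δ by linarith)]
      with x hx
    split_ifs with h
    · rfl
    · exact (hG x (abs_lt.2 ⟨by linarith, by linarith⟩)).symm
  · right
    filter_upwards [(isOpen_lt continuous_const hτ).mem_nhds (show a - δ < τ p by linarith)]
      with x hx
    split_ifs with h
    · exact hG x (abs_lt.2 ⟨by linarith, by linarith⟩)
    · rfl

end Piecewise

section Rank

variable {V W F : Type*} [NormedAddCommGroup V] [NormedSpace ℝ V]
  [NormedAddCommGroup W] [NormedSpace ℝ W] [NormedAddCommGroup F] [NormedSpace ℝ F]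
  {N : Type*} [TopologicalSpace N] [ChartedSpace F N]

theorem contMDiff_of_eventuallyEq_or {f G₁ G₂ : V → N}
    (h₁ : ContMDiff 𝓘(ℝ, V) 𝓘(ℝ, F) (⊤ : ℕ∞) G₁) (h₂ : ContMDiff 𝓘(ℝ, V) 𝓘(ℝ, F) (⊤ : ℕ∞) G₂)
    (hf : ∀ p, f =ᶠ[𝓝 p] G₁ ∨ f =ᶠ[𝓝 p] G₂) : ContMDiff 𝓘(ℝ, V) 𝓘(ℝ, F) (⊤ : ℕ∞) f := fun p =>
  (hf p).elim (fun h => (h₁ p).congr_of_eventuallyEq h) (fun h => (h₂ p).congr_of_eventuallyEq h)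

variable (F) in
def MFDerivRankLE (k : ℕ) (f : V → N) : Prop :=
  ∀ p, Module.finrank ℝ (LinearMap.range (mfderiv 𝓘(ℝ, V) 𝓘(ℝ, F) f p).toLinearMap) ≤ k

theorem MFDerivRankLE.comp_contDiff [FiniteDimensional ℝ F] {k : ℕ} {f : W → N} {L : V → W}
    (hf : MFDerivRankLE F k f) (hfs : ContMDiff 𝓘(ℝ, W) 𝓘(ℝ, F) (⊤ : ℕ∞) f)
    (hL : ContDiff ℝ (⊤ : ℕ∞) L) : MFDerivRankLE F k (f ∘ L) := by
  intro p
  have (y : N) : FiniteDimensional ℝ (TangentSpace 𝓘(ℝ, F) y) := ‹FiniteDimensional ℝ F›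
  rw [mfderiv_comp p (hfs.mdifferentiable (by simp) _)
      (hL.contMDiff.mdifferentiable (by simp) _), ContinuousLinearMap.toLinearMap_comp]
  exact (Submodule.finrank_mono (LinearMap.range_comp_le_range _ _)).trans (hf _)

theorem MFDerivRankLE.of_eventuallyEq_or {k : ℕ} {f G₁ G₂ : V → N} (h₁ : MFDerivRankLE F k G₁)
    (h₂ : MFDerivRankLE F k G₂) (hf : ∀ p, f =ᶠ[𝓝 p] G₁ ∨ f =ᶠ[𝓝 p] G₂) : MFDerivRankLE F k f := by
  intro p
  rcases hf p with h | h <;> rw [h.mfderiv_eq]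
  exacts [h₁ p, h₂ p]

end Rank

section Collar

variable {X : Type*}

/-- The `ε`-conditions of `IsTwoPath`: the second component of `IsTwoPath F g` is
definitionally `∃ ε > 0, IsCollared ε g`. -/
def IsCollared (ε : ℝ) (g : ℝ × ℝ → X) : Prop :=
  (∀ s t, s ≤ ε → g (s, t) = g (0, t)) ∧ (∀ s t, 1 - ε ≤ s → g (s, t) = g (1, t)) ∧
    (∀ s t, t ≤ ε → g (s, t) = g (s, 0)) ∧ (∀ s t, 1 - ε ≤ t → g (s, t) = g (s, 1))

theorem IsCollared.mono {ε ε' : ℝ} {g : ℝ × ℝ → X} (hg : IsCollared ε g) (h : ε' ≤ ε) :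
    IsCollared ε' g :=
  ⟨fun s t hs => hg.1 s t (by linarith), fun s t hs => hg.2.1 s t (by linarith),
    fun s t ht => hg.2.2.1 s t (by linarith), fun s t ht => hg.2.2.2 s t (by linarith)⟩

theorem exists_common_isCollared {g h : ℝ × ℝ → X} (hg : ∃ ε > 0, IsCollared ε g)
    (hh : ∃ ε > 0, IsCollared ε h) : ∃ ε > 0, ε < 1 ∧ IsCollared ε g ∧ IsCollared ε h := by
  obtain ⟨ε₁, hε₁, hg⟩ := hg
  obtain ⟨ε₂, hε₂, hh⟩ := hh
  refine ⟨min (min ε₁ ε₂) (1 / 2), by positivity, (min_le_right _ _).trans_lt (by norm_num),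
    hg.mono ?_, hh.mono ?_⟩
  · exact (min_le_left _ _).trans (min_le_left _ _)
  · exact (min_le_left _ _).trans (min_le_right _ _)

variable {g h g' h' : ℝ × ℝ → X}

theorem horizComp_apply_of_le {s t : ℝ} (ht : t ≤ 1 / 2) :
    horizComp g h (s, t) = g (s, 2 * t) :=
  if_pos ht

theorem horizComp_apply_of_lt {s t : ℝ} (ht : 1 / 2 < t) :
    horizComp g h (s, t) = h (s, 2 * t - 1) :=
  if_neg (not_le.2 ht)

@[simp]
theorem horizComp_apply_zero (s : ℝ) : horizComp g h (s, 0) = g (s, 0) := by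
  rw [horizComp_apply_of_le (by norm_num), mul_zero]

@[simp]
theorem horizComp_apply_one (s : ℝ) : horizComp g h (s, 1) = h (s, 1) := by
  rw [horizComp_apply_of_lt (by norm_num)]
  norm_num

theorem horizComp_congr {s s' : ℝ} (hg : ∀ t, g (s, t) = g' (s', t))
    (hh : ∀ t, h (s, t) = h' (s', t)) (t : ℝ) : horizComp g h (s, t) = horizComp g' h' (s', t) := by
  unfold horizComp
  split_ifs
  exacts [hg _, hh _]

theorem IsCollared.horizComp {ε : ℝ} (hg : IsCollared ε g) (hh : IsCollared ε h) (hε : 0 ≤ ε)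
    (hε₁ : ε < 1) : IsCollared (ε / 2) (horizComp g h) := by
  refine ⟨fun s t hs => ?_, fun s t hs => ?_, fun s t ht => ?_, fun s t ht => ?_⟩
  · exact horizComp_congr (fun t => hg.1 s t (by linarith)) (fun t => hh.1 s t (by linarith)) t
  · exact horizComp_congr (fun t => hg.2.1 s t (by linarith)) (fun t => hh.2.1 s t (by linarith)) t
  · rw [horizComp_apply_of_le (by linarith), horizComp_apply_zero]
    exact hg.2.2.1 s _ (by linarith)
  · rw [horizComp_apply_of_lt (by linarith), horizComp_apply_one]
    exact hh.2.2.2 s _ (by linarith)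

theorem IsCollared.seam_eq {ε : ℝ} {c : X} (hg : IsCollared ε g) (hh : IsCollared ε h)
    (hg₁ : ∀ s, g (s, 1) = c) (hh₀ : ∀ s, h (s, 0) = c) {s t : ℝ} (ht : |t - 1 / 2| < ε / 2) :
    g (s, 2 * t) = h (s, 2 * t - 1) := by
  rw [abs_lt] at ht
  rw [hg.2.2.2 s _ (by linarith), hg₁, hh.2.2.1 s _ (by linarith), hh₀]

end Collar

section TwoPath

variable {F : Type*} [NormedAddCommGroup F] [NormedSpace ℝ F]
  {N : Type*} [TopologicalSpace N] [ChartedSpace F N] {g h : ℝ × ℝ → N}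

theorem IsTwoPath.horizComp_eventuallyEq_or (hg : IsTwoPath F g) (hh : IsTwoPath F h)
    (hm : g (0, 1) = h (0, 0)) (p : ℝ × ℝ) :
    horizComp g h =ᶠ[𝓝 p] g ∘ (fun q => (q.1, 2 * q.2)) ∨
      horizComp g h =ᶠ[𝓝 p] h ∘ (fun q => (q.1, 2 * q.2 - 1)) := by
  obtain ⟨ε, hε, -, hgε, hhε⟩ := exists_common_isCollared hg.2.1 hh.2.1
  exact ite_eventuallyEq_or continuous_snd (half_pos hε) (fun q hq => hgε.seam_eq hhε
    (fun s => hg.2.2.2 s 0) (fun s => (hh.2.2.1 s 0).trans hm.symm) hq) p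

theorem IsTwoPath.horizComp (hg : IsTwoPath F g) (hh : IsTwoPath F h)
    (hm : g (0, 1) = h (0, 0)) : IsTwoPath F (horizComp g h) := by
  obtain ⟨ε, hε, hε₁, hgε, hhε⟩ := exists_common_isCollared hg.2.1 hh.2.1
  refine ⟨contMDiff_of_eventuallyEq_or ?_ ?_ (hg.horizComp_eventuallyEq_or hh hm),
    ⟨ε / 2, half_pos hε, hgε.horizComp hhε hε.le hε₁⟩, fun s s' => ?_, fun s s' => ?_⟩
  · exact hg.1.comp (ContDiff.contMDiff (by fun_prop))
  · exact hh.1.comp (ContDiff.contMDiff (by fun_prop))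
  · simpa using hg.2.2.1 s s'
  · simpa using hh.2.2.2 s s'

theorem IsRank1Homotopy.horizComp [FiniteDimensional ℝ F] (hg : IsRank1Homotopy F g)
    (hh : IsRank1Homotopy F h) (hm : g (0, 1) = h (0, 0)) :
    IsRank1Homotopy F (horizComp g h) :=
  ⟨hg.1.horizComp hh.1 hm, MFDerivRankLE.of_eventuallyEq_or
    (MFDerivRankLE.comp_contDiff hg.2 hg.1.1 (by fun_prop))
    (MFDerivRankLE.comp_contDiff hh.2 hh.1.1 (by fun_prop))
    (hg.1.horizComp_eventuallyEq_or hh.1 hm)⟩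

end TwoPath

section ThreePath

variable {X : Type*}

noncomputable def horizCompFamily (α β : ℝ × ℝ × ℝ → X) : ℝ × ℝ × ℝ → X := fun p =>
  horizComp (fun q => α (p.1, q)) (fun q => β (p.1, q)) p.2

theorem horizCompFamily_apply (α β : ℝ × ℝ × ℝ → X) (r s t : ℝ) :
    horizCompFamily α β (r, s, t) = horizComp (fun q => α (r, q)) (fun q => β (r, q)) (s, t) :=
  rfl

variable {F : Type*} [NormedAddCommGroup F] [NormedSpace ℝ F]
  {N : Type*} [TopologicalSpace N] [ChartedSpace F N] {α β : ℝ × ℝ × ℝ → N}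

theorem IsThreePath.exists_common_collar (hα : IsThreePath F α) (hβ : IsThreePath F β) :
    ∃ ε > 0, ε < 1 ∧
      (∀ r s t, r ≤ ε → α (r, s, t) = α (0, s, t) ∧ β (r, s, t) = β (0, s, t)) ∧
      (∀ r s t, 1 - ε ≤ r → α (r, s, t) = α (1, s, t) ∧ β (r, s, t) = β (1, s, t)) ∧
      ∀ r, IsCollared ε (fun q => α (r, q)) ∧ IsCollared ε (fun q => β (r, q)) := by
  obtain ⟨ε₁, hε₁, hα₁, hα₂, hα₃, hα₄, hα₅, hα₆⟩ := hα.2.1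
  obtain ⟨ε₂, hε₂, hβ₁, hβ₂, hβ₃, hβ₄, hβ₅, hβ₆⟩ := hβ.2.1
  have h₁ : min (min ε₁ ε₂) (1 / 2) ≤ ε₁ := (min_le_left _ _).trans (min_le_left _ _)
  have h₂ : min (min ε₁ ε₂) (1 / 2) ≤ ε₂ := (min_le_left _ _).trans (min_le_right _ _)
  refine ⟨min (min ε₁ ε₂) (1 / 2), by positivity, (min_le_right _ _).trans_lt (by norm_num),
    fun r s t hr => ⟨hα₁ r s t (by linarith), hβ₁ r s t (by linarith)⟩,
    fun r s t hr => ⟨hα₂ r s t (by linarith), hβ₂ r s t (by linarith)⟩,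
    fun r => ⟨IsCollared.mono ⟨hα₃ r, hα₄ r, hα₅ r, hα₆ r⟩ h₁,
      IsCollared.mono ⟨hβ₃ r, hβ₄ r, hβ₅ r, hβ₆ r⟩ h₂⟩⟩

theorem IsThreePath.horizCompFamily_eventuallyEq_or (hα : IsThreePath F α)
    (hβ : IsThreePath F β) (hm : α (0, 0, 1) = β (0, 0, 0)) (p : ℝ × ℝ × ℝ) :
    horizCompFamily α β =ᶠ[𝓝 p] α ∘ (fun q => (q.1, q.2.1, 2 * q.2.2)) ∨
      horizCompFamily α β =ᶠ[𝓝 p] β ∘ (fun q => (q.1, q.2.1, 2 * q.2.2 - 1)) := by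
  obtain ⟨ε, hε, -, -, -, hcol⟩ := hα.exists_common_collar hβ
  exact ite_eventuallyEq_or (continuous_snd.comp continuous_snd) (half_pos hε)
    (fun q hq => (hcol q.1).1.seam_eq (hcol q.1).2 (fun s => hα.2.2.2 q.1 s 0 0)
      (fun s => (hβ.2.2.1 q.1 s 0 0).trans hm.symm) hq) p

theorem IsThreePath.horizCompFamily (hα : IsThreePath F α) (hβ : IsThreePath F β)
    (hm : α (0, 0, 1) = β (0, 0, 0)) : IsThreePath F (horizCompFamily α β) := by
  obtain ⟨ε, hε, hε₁, hr₀, hr₁, hcol⟩ := hα.exists_common_collar hβ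
  have hcomp r := (hcol r).1.horizComp (hcol r).2 hε.le hε₁
  refine ⟨contMDiff_of_eventuallyEq_or (hα.1.comp (ContDiff.contMDiff (by fun_prop)))
      (hβ.1.comp (ContDiff.contMDiff (by fun_prop))) (hα.horizCompFamily_eventuallyEq_or hβ hm),
    ⟨ε / 2, half_pos hε, fun r s t hr => ?_, fun r s t hr => ?_, fun r => (hcomp r).1,
      fun r => (hcomp r).2.1, fun r => (hcomp r).2.2.1, fun r => (hcomp r).2.2.2⟩,
    fun r s r' s' => ?_, fun r s r' s' => ?_⟩
  · exact horizComp_congr (fun t => (hr₀ r s t (by linarith)).1)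
      (fun t => (hr₀ r s t (by linarith)).2) t
  · exact horizComp_congr (fun t => (hr₁ r s t (by linarith)).1)
      (fun t => (hr₁ r s t (by linarith)).2) t
  · simp only [horizCompFamily_apply, horizComp_apply_zero]
    exact hα.2.2.1 r s r' s'
  · simp only [horizCompFamily_apply, horizComp_apply_one]
    exact hβ.2.2.2 r s r' s'

theorem IsRank2Homotopy.horizCompFamily [FiniteDimensional ℝ F] (hα : IsRank2Homotopy F α)
    (hβ : IsRank2Homotopy F β) (hm : α (0, 0, 1) = β (0, 0, 0)) :
    IsRank2Homotopy F (horizCompFamily α β) :=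
  ⟨hα.1.horizCompFamily hβ.1 hm,
    MFDerivRankLE.of_eventuallyEq_or (MFDerivRankLE.comp_contDiff hα.2.1 hα.1.1 (by fun_prop))
      (MFDerivRankLE.comp_contDiff hβ.2.1 hβ.1.1 (by fun_prop))
      (hα.1.horizCompFamily_eventuallyEq_or hβ.1 hm),
    hα.2.2.1.horizComp hβ.2.2.1 hm,
    hα.2.2.2.horizComp hβ.2.2.2 ((hα.1.2.2.2 0 1 0 0).trans (hm.trans (hβ.1.2.2.1 0 0 0 1)))⟩

end ThreePath

theorem horizComp_rank2Homotopic (g g' h h' : ℝ × ℝ → M)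
    (Hg : Rank2Homotopic E g g') (Hh : Rank2Homotopic E h h')
    (hmatch : g (0, 1) = h (0, 0)) :
    Rank2Homotopic E (horizComp g h) (horizComp g' h') := by
  obtain ⟨α, hα, hα₀, hα₁⟩ := Hg
  obtain ⟨β, hβ, hβ₀, hβ₁⟩ := Hh
  refine ⟨horizCompFamily α β,
    hα.horizCompFamily hβ ((hα₀ 0 1).trans (hmatch.trans (hβ₀ 0 0).symm)), fun s t => ?_,
    fun s t => ?_⟩
  · exact horizComp_congr (fun t => hα₀ s t) (fun t => hβ₀ s t) t
  · exact horizComp_congr (fun t => hα₁ s t) (fun t => hβ₁ s t) t
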